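/- arXiv:1810.00824 — 2 statements merged into one kernel-verified Lean document; each statement's English description precedes it below -/
import Mathlib

section
/- Let k be an algebraically closed field of characteristic zero, G a finite group acting faithfully and regularly on an irreducible affine variety X with dim X > 0. Then every finite-dimensional kG-module M is isomorphic to a kG-submodule of the coordinate ring k[X]. -/
/-!
Points of `X` are the `k`-algebra maps `A →ₐ[k] k`, on which `G` acts by `(g • x) a = x (g⁻¹ • a)`.
By the Nullstellensatz, points of `X` avoiding any proper closed subset always exist; avoiding the
fixed loci of the `g ≠ 1` and finitely many given orbits, one finds `n = dim M` points `xᵢ` with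
free, pairwise disjoint orbits. By the Chinese remainder theorem there is a linear
`s : M → k[X]` with `s m (g • xᵢ) = mᵢ` for `g = 1` and `0` otherwise, where `mᵢ` are the
coordinates of `m` in a basis. The symmetrization `φ m = ∑ g, g • s (g⁻¹ • m)` is equivariant and
still satisfies `φ m (xᵢ) = mᵢ`, so it is injective.
-/

namespace MulAction

theorem exists_injective_smul_of_exists_free_notMem_orbit {G X : Type*} [Group G] [MulAction G X]
    (h : ∀ T : Finset X, ∃ x : X, (∀ g : G, g • x = x → g = 1) ∧ ∀ y ∈ T, x ∉ orbit G y)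
    (n : ℕ) : ∃ ε : Fin n → X, Function.Injective fun p : G × Fin n => p.1 • ε p.2 := by
  classical
  induction n with
  | zero => exact ⟨Fin.elim0, fun p => p.2.elim0⟩
  | succ n ih =>
    obtain ⟨ε, hε⟩ := ih
    obtain ⟨x, hfree, hnew⟩ := h (Finset.univ.image ε)
    have hx : ∀ i (g g' : G), g • ε i ≠ g' • x := fun i g g' heq =>
      hnew (ε i) (Finset.mem_image_of_mem ε (Finset.mem_univ i))
        ⟨g'⁻¹ * g, show (g'⁻¹ * g) • ε i = x by rw [mul_smul, heq, inv_smul_smul]⟩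
    refine ⟨Fin.snoc ε x, ?_⟩
    rintro ⟨g, i⟩ ⟨g', i'⟩ heq
    induction i using Fin.lastCases <;> induction i' using Fin.lastCases <;>
      simp only [Fin.snoc_last, Fin.snoc_castSucc] at heq
    · rw [inv_mul_eq_one.1 (hfree (g'⁻¹ * g) (by rw [mul_smul, heq, inv_smul_smul]))]
    · exact absurd heq.symm (hx _ _ _)
    · exact absurd heq (hx _ _ _)
    · obtain ⟨rfl, rfl⟩ := Prod.ext_iff.1 (hε (a₁ := (g, _)) (a₂ := (g', _)) heq)
      rfl

end MulAction

section Points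

variable {k A : Type*} [Field k] [CommRing A] [Algebra k A]

theorem AlgHom.eq_of_ker_le {ψ ψ' : A →ₐ[k] k} (h : RingHom.ker ψ ≤ RingHom.ker ψ') :
    ψ = ψ' := by
  ext a
  have := h (show a - algebraMap k A (ψ a) ∈ RingHom.ker ψ by simp)
  rw [RingHom.mem_ker, map_sub, AlgHom.commutes, sub_eq_zero] at this
  exact this.symm

theorem surjective_pi_algHom_of_injective {J : Type*} [Finite J] {Ψ : J → A →ₐ[k] k}
    (hΨ : Function.Injective Ψ) : Function.Surjective fun (a : A) (j : J) => Ψ j a := by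
  intro f
  have hmax (j : J) : (RingHom.ker (Ψ j)).IsMaximal :=
    RingHom.ker_isMaximal_of_surjective _ fun c => ⟨algebraMap k A c, AlgHom.commutes _ c⟩
  have hcop : Pairwise fun i j => IsCoprime (RingHom.ker (Ψ i)) (RingHom.ker (Ψ j)) :=
    fun i j hij => Ideal.isCoprime_iff_sup_eq.2 <|
      (hmax i).coprime_of_ne (hmax j) fun h => hij (hΨ (AlgHom.eq_of_ker_le h.le))
  obtain ⟨a, ha⟩ := Ideal.exists_forall_sub_mem_ideal hcop fun j => algebraMap k A (f j)
  exact ⟨a, funext fun j => by simpa [sub_eq_zero] using ha j⟩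

theorem exists_linearMap_forall_algHom_apply_eq {M J : Type*} [AddCommGroup M] [Module k M]
    [Finite J] {Ψ : J → A →ₐ[k] k} (hΨ : Function.Injective Ψ) (f : M →ₗ[k] J → k) :
    ∃ s : M →ₗ[k] A, ∀ m j, Ψ j (s m) = f m j := by
  obtain ⟨s, hs⟩ := Module.projective_lifting_property
    (LinearMap.pi fun j => (Ψ j).toLinearMap) f (surjective_pi_algHom_of_injective hΨ)
  exact ⟨s, fun m j => congrFun (LinearMap.congr_fun hs m) j⟩

theorem exists_ne_zero_algHom_apply_eq_zero {a : A} (ha : Transcendental k a) (ψ : A →ₐ[k] k) :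
    ∃ c : A, c ≠ 0 ∧ ψ c = 0 :=
  ⟨a - algebraMap k A (ψ a), fun h => ha (sub_eq_zero.1 h ▸ isAlgebraic_algebraMap (ψ a)),
    by simp⟩

variable [IsAlgClosed k] [Algebra.FiniteType k A]

theorem exists_algHom_apply_ne_zero {b : A} (hb : ¬IsNilpotent b) :
    ∃ ε : A →ₐ[k] k, ε b ≠ 0 := by
  have : IsJacobsonRing A := isJacobsonRing_of_finiteType (A := k)
  have hb' : b ∉ (⊥ : Ideal A).jacobson := by
    rw [← Ideal.radical_eq_jacobson]
    exact fun h => hb (mem_nilradical.1 h)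
  obtain ⟨m, ⟨-, hm⟩, hbm⟩ : ∃ m : Ideal A, (⊥ ≤ m ∧ m.IsMaximal) ∧ b ∉ m := by
    simpa [Ideal.jacobson, Ideal.mem_sInf] using hb'
  let := Ideal.Quotient.field m
  have : Algebra.FiniteType k (A ⧸ m) :=
    .of_surjective (Ideal.Quotient.mkₐ k m) Ideal.Quotient.mk_surjective
  have : Module.Finite k (A ⧸ m) := finite_of_finite_type_of_isJacobsonRing k (A ⧸ m)
  refine ⟨(IsAlgClosed.lift : A ⧸ m →ₐ[k] k).comp (Ideal.Quotient.mkₐ k m), ?_⟩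
  simpa [Ideal.Quotient.eq_zero_iff_mem] using hbm

theorem exists_algHom_forall_apply_ne_zero [IsDomain A] {ι : Type*} [Fintype ι] (b : ι → A)
    (hb : ∀ i, b i ≠ 0) : ∃ ε : A →ₐ[k] k, ∀ i, ε (b i) ≠ 0 := by
  obtain ⟨ε, hε⟩ := exists_algHom_apply_ne_zero (k := k) (b := ∏ i, b i)
    (by simpa [isNilpotent_iff_eq_zero, Finset.prod_eq_zero_iff] using hb)
  exact ⟨ε, by simpa [Finset.prod_ne_zero_iff] using hε⟩

end Points

section Action

variable {R A B G : Type*} [CommSemiring R] [Semiring A] [Semiring B] [Algebra R A] [Algebra R B]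
  [Group G] [MulSemiringAction G A] [SMulCommClass G R A]

instance AlgHom.instMulActionPrecomp : MulAction G (A →ₐ[R] B) where
  smul g ψ := ψ.comp (MulSemiringAction.toAlgHom R A g⁻¹)
  one_smul ψ := AlgHom.ext fun a => show ψ ((1 : G)⁻¹ • a) = ψ a by rw [inv_one, one_smul]
  mul_smul g h ψ := AlgHom.ext fun a =>
    show ψ ((g * h)⁻¹ • a) = ψ (h⁻¹ • g⁻¹ • a) by rw [mul_inv_rev, mul_smul]

theorem AlgHom.smul_apply_eq_apply_inv_smul (g : G) (ψ : A →ₐ[R] B) (a : A) :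
    (g • ψ) a = ψ (g⁻¹ • a) :=
  rfl

end Action

theorem exists_algHom_free_notMem_orbit {k A G : Type*} [Field k] [IsAlgClosed k] [CommRing A]
    [IsDomain A] [Algebra k A] [Algebra.FiniteType k A] [Group G] [Finite G]
    [MulSemiringAction G A] [SMulCommClass G k A] [FaithfulSMul G A] {a : A}
    (ha : Transcendental k a) (T : Finset (A →ₐ[k] k)) :
    ∃ x : A →ₐ[k] k, (∀ g : G, g • x = x → g = 1) ∧ ∀ y ∈ T, x ∉ MulAction.orbit G y := by
  classical
  have := Fintype.ofFinite G
  have hmoved (g : {g : G // g ≠ 1}) :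
      ∃ d : A, d ≠ 0 ∧ ∀ x : A →ₐ[k] k, (g : G) • x = x → x d = 0 := by
    obtain ⟨b, hb⟩ : ∃ b : A, (g : G)⁻¹ • b ≠ b := by
      by_contra! h
      exact g.2 (inv_eq_one.1 (FaithfulSMul.eq_of_smul_eq_smul fun b : A => by simp [h b]))
    refine ⟨(g : G)⁻¹ • b - b, sub_ne_zero.2 hb, fun x hx => ?_⟩
    rw [map_sub, ← AlgHom.smul_apply_eq_apply_inv_smul, hx, sub_self]
  choose d hd0 hd using hmoved
  choose c hc0 hc using fun p : T × G => exists_ne_zero_algHom_apply_eq_zero ha (p.2 • p.1.1)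
  obtain ⟨x, hx⟩ := exists_algHom_forall_apply_ne_zero (k := k) (Sum.elim d c)
    (by rintro (i | i) <;> simp [hd0, hc0])
  refine ⟨x, fun g hg => by_contra fun h1 => hx (.inl ⟨g, h1⟩) (hd _ x hg), ?_⟩
  rintro y hy ⟨g, rfl⟩
  exact hx (.inr (⟨y, hy⟩, g)) (hc (⟨y, hy⟩, g))

section Embedding

variable {k V W : Type*} (G : Type*) [Field k] [Group G] [Fintype G]
  [AddCommGroup V] [Module k V] [DistribMulAction G V] [SMulCommClass G k V]
  [AddCommGroup W] [Module k W] [DistribMulAction G W] [SMulCommClass G k W]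

def LinearMap.sumConjugates (s : V →ₗ[k] W) : V →ₗ[k] W :=
  ∑ g : G, DistribSMul.toLinearMap k W g ∘ₗ s ∘ₗ DistribSMul.toLinearMap k V g⁻¹

variable {G}

theorem LinearMap.sumConjugates_apply (s : V →ₗ[k] W) (v : V) :
    s.sumConjugates G v = ∑ g : G, g • s (g⁻¹ • v) := by
  simp [sumConjugates]

theorem LinearMap.sumConjugates_smul (s : V →ₗ[k] W) (h : G) (v : V) :
    s.sumConjugates G (h • v) = h • s.sumConjugates G v := by
  rw [sumConjugates_apply, sumConjugates_apply, Finset.smul_sum,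
    ← Equiv.sum_comp (Equiv.mulLeft h)]
  simp [mul_smul]

end Embedding

theorem exists_injective_equivariant_of_injective_smul {k A G M ι : Type*} [Field k] [CommRing A]
    [Algebra k A] [Group G] [Fintype G] [MulSemiringAction G A] [SMulCommClass G k A]
    [AddCommGroup M] [Module k M] [DistribMulAction G M] [SMulCommClass G k M] [Fintype ι]
    (b : Module.Basis ι k M) {ε : ι → A →ₐ[k] k}
    (hε : Function.Injective fun p : G × ι => p.1 • ε p.2) :
    ∃ φ : M →ₗ[k] A, Function.Injective φ ∧ ∀ (g : G) (m : M), φ (g • m) = g • φ m := by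
  classical
  obtain ⟨s, hs⟩ := exists_linearMap_forall_algHom_apply_eq hε
    (LinearMap.pi fun p : G × ι => if p.1 = 1 then b.coord p.2 else 0)
  have hcoord (m : M) (i : ι) : ε i (s.sumConjugates G m) = b.repr m i := by
    have (g : G) : ε i (g • s (g⁻¹ • m)) = if g = 1 then b.repr m i else 0 := by
      rcases eq_or_ne g 1 with rfl | hg
      · simpa using hs m (1, i)
      · simpa [hg, AlgHom.smul_apply_eq_apply_inv_smul] using hs (g⁻¹ • m) (g⁻¹, i)
    simp [LinearMap.sumConjugates_apply, this]
  refine ⟨s.sumConjugates G, fun m m' h => b.ext_elem fun i => ?_, s.sumConjugates_smul⟩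
  rw [← hcoord, ← hcoord, h]

theorem stmt_8_general {k A G M : Type*} [Field k] [IsAlgClosed k]
    [CommRing A] [IsDomain A] [Algebra k A] [Algebra.FiniteType k A]
    [Group G] [Finite G] [MulSemiringAction G A] [SMulCommClass G k A] [FaithfulSMul G A]
    (hdim : ∃ a : A, Transcendental k a)
    [AddCommGroup M] [Module k M] [DistribMulAction G M] [SMulCommClass G k M]
    [FiniteDimensional k M] :
    ∃ φ : M →ₗ[k] A, Function.Injective φ ∧ ∀ (g : G) (m : M), φ (g • m) = g • φ m := by
  have := Fintype.ofFinite G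
  obtain ⟨a, ha⟩ := hdim
  obtain ⟨ε, hε⟩ := MulAction.exists_injective_smul_of_exists_free_notMem_orbit
    (exists_algHom_free_notMem_orbit (G := G) ha) (Module.finrank k M)
  exact exists_injective_equivariant_of_injective_smul (Module.finBasis k M) hε

/-- If a finite group `G` acts faithfully and regularly on an irreducible affine variety
`X` of positive dimension (encoded: `A = k[X]` is a finitely generated domain over the
algebraically closed field `k` of characteristic zero with a transcendental element, on
which `G` acts faithfully by `k`-algebra automorphisms), then every finite-dimensional
`kG`-module `M` embeds `G`-equivariantly and `k`-linearly into `A = k[X]`. -/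
theorem stmt_8 {k A G M : Type*} [Field k] [IsAlgClosed k] [CharZero k]
    [CommRing A] [IsDomain A] [Algebra k A] [Algebra.FiniteType k A]
    [Group G] [Finite G] [MulSemiringAction G A] [SMulCommClass G k A] [FaithfulSMul G A]
    (hdim : ∃ a : A, Transcendental k a)
    [AddCommGroup M] [Module k M] [DistribMulAction G M] [SMulCommClass G k M]
    [FiniteDimensional k M] :
    ∃ φ : M →ₗ[k] A, Function.Injective φ ∧ ∀ (g : G) (m : M), φ (g • m) = g • φ m :=
  stmt_8_general hdim
end

section
/- Let P be a Jordan group with Jordan constant J_P, and let Q₁, ..., Q_s be groups each containing a non-abelian finite subgroup. If s > log₂(J_P), then there is no injective group homomorphism Q₁ × ⋯ × Q_s → P. -/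
/-- `mConst H` is the minimal index of a normal abelian subgroup of `H`. -/
noncomputable def mConst (H : Type*) [Group H] : ℕ :=
  sInf {n : ℕ | ∃ S : Subgroup H, S.Normal ∧ (∀ a ∈ S, ∀ b ∈ S, a * b = b * a) ∧
    S.index = n}

/-- The Jordan constant `J_G` of a group `G`: the supremum of `mConst F` over all
finite subgroups `F` of `G`. `G` is Jordan iff `jordanConst G < ∞`. -/
noncomputable def jordanConst (G : Type*) [Group G] : ℕ∞ :=
  ⨆ (F : Subgroup G) (_ : Finite F), (mConst F : ℕ∞)

/-!
An abelian subgroup `S` of `B₁ × ⋯ × B_s` lies in the product of its projections, and each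
projection is an abelian subgroup of `Bᵢ`, hence proper when `Bᵢ` is non-abelian. So the index
of `S` is at least `2^s`. An injective `Q₁ × ⋯ × Q_s → P` would carry the finite subgroup
`F₁ × ⋯ × F_s` (with `Fᵢ ≤ Qᵢ` finite non-abelian) isomorphically into `P`, forcing
`2^s ≤ J_P`.
-/

open Function

namespace Subgroup

variable {ι : Type*} [Fintype ι] {G : ι → Type*} [∀ i, Group (G i)]

lemma index_pi' (H : ∀ i, Subgroup (G i)) :
    (pi Set.univ H).index = ∏ i, (H i).index := by
  simp_rw [index, ← Nat.card_pi]
  refine Nat.card_congr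
    ((Quotient.congrRight (fun x y ↦ ?_)).trans (Setoid.piQuotientEquiv _).symm)
  rw [QuotientGroup.leftRel_pi]

lemma two_le_index_of_commute {B : Type*} [Group B] [Finite B]
    (hB : ¬ ∀ a b : B, a * b = b * a) {T : Subgroup B}
    (hT : ∀ a ∈ T, ∀ b ∈ T, a * b = b * a) : 2 ≤ T.index := by
  have hT_ne_top : T ≠ ⊤ := by
    rintro rfl
    exact hB fun a b ↦ hT a (mem_top a) b (mem_top b)
  exact one_lt_index_of_ne_top hT_ne_top

lemma two_pow_card_le_index_of_commute [∀ i, Finite (G i)]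
    (hG : ∀ i, ¬ ∀ a b : G i, a * b = b * a) {S : Subgroup (∀ i, G i)}
    (hS : ∀ a ∈ S, ∀ b ∈ S, a * b = b * a) : 2 ^ Fintype.card ι ≤ S.index := by
  set T : ∀ i, Subgroup (G i) := fun i ↦ S.map (Pi.evalMonoidHom G i)
  have hT_comm (i : ι) : ∀ a ∈ T i, ∀ b ∈ T i, a * b = b * a := by
    rintro _ ⟨x, hx, rfl⟩ _ ⟨y, hy, rfl⟩
    rw [← map_mul, ← map_mul, hS x hx y hy]
  have hS_le : S ≤ pi Set.univ T := fun x hx i _ ↦ ⟨x, hx, rfl⟩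
  calc 2 ^ Fintype.card ι = ∏ _i : ι, 2 := by simp
    _ ≤ ∏ i, (T i).index :=
      Finset.prod_le_prod' fun i _ ↦ two_le_index_of_commute (hG i) (hT_comm i)
    _ = (pi Set.univ T).index := (index_pi' T).symm
    _ ≤ S.index := Nat.le_of_dvd (Nat.pos_of_ne_zero index_ne_zero_of_finite)
      (index_dvd_of_le hS_le)

end Subgroup

section mConst

variable (H : Type*) [Group H]

lemma exists_index_eq_mConst :
    ∃ S : Subgroup H, S.Normal ∧ (∀ a ∈ S, ∀ b ∈ S, a * b = b * a) ∧ S.index = mConst H :=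
  Nat.sInf_mem (s := {n | ∃ S : Subgroup H, S.Normal ∧ (∀ a ∈ S, ∀ b ∈ S, a * b = b * a) ∧
    S.index = n}) ⟨_, ⊥, inferInstance, by simp, rfl⟩

variable {H} {K : Type*} [Group K]

lemma mConst_le_of_surjective [Finite H] (f : H →* K) (hf : Surjective f) :
    mConst K ≤ mConst H := by
  obtain ⟨S, hS_normal, hS_comm, hS_index⟩ := exists_index_eq_mConst H
  have hfS_comm : ∀ a ∈ S.map f, ∀ b ∈ S.map f, a * b = b * a := by
    rintro _ ⟨x, hx, rfl⟩ _ ⟨y, hy, rfl⟩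
    rw [← map_mul, ← map_mul, hS_comm x hx y hy]
  calc mConst K ≤ (S.map f).index := Nat.sInf_le ⟨_, hS_normal.map f hf, hfS_comm, rfl⟩
    _ ≤ S.index := Nat.le_of_dvd (Nat.pos_of_ne_zero S.index_ne_zero_of_finite)
      (S.index_map_dvd hf)
    _ = mConst H := hS_index

lemma mConst_le_jordanConst_of_injective [Finite H] (f : H →* K) (hf : Injective f) :
    (mConst H : ℕ∞) ≤ jordanConst K := by
  let e : H ≃* f.range := MonoidHom.ofInjective hf
  have : Finite f.range := Finite.of_equiv H e
  calc (mConst H : ℕ∞) ≤ mConst f.range := by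
        exact_mod_cast mConst_le_of_surjective e.symm.toMonoidHom e.symm.surjective
    _ ≤ jordanConst K := le_iSup₂_of_le f.range this le_rfl

lemma two_pow_card_le_mConst_pi {ι : Type*} [Fintype ι] {G : ι → Type*} [∀ i, Group (G i)]
    [∀ i, Finite (G i)] (hG : ∀ i, ¬ ∀ a b : G i, a * b = b * a) :
    2 ^ Fintype.card ι ≤ mConst (∀ i, G i) := by
  obtain ⟨S, -, hS_comm, hS_index⟩ := exists_index_eq_mConst (∀ i, G i)
  exact hS_index ▸ Subgroup.two_pow_card_le_index_of_commute hG hS_comm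

end mConst

theorem stmt_14_general {P : Type*} [Group P] {s : ℕ} (Q : Fin s → Type*) [∀ i, Group (Q i)]
    (hQ : ∀ i, ∃ F : Subgroup (Q i), Finite F ∧ ¬ ∀ a b : F, a * b = b * a)
    (hs : jordanConst P < (2 : ℕ∞) ^ s) :
    ¬ ∃ φ : (∀ i, Q i) →* P, Function.Injective φ := by
  rintro ⟨φ, hφ⟩
  choose F hF_finite hF_noncomm using hQ
  have hembed : Injective (φ.comp (MonoidHom.piMap fun i ↦ (F i).subtype)) :=
    hφ.comp (Pi.map_injective.mpr fun i ↦ Subtype.val_injective)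
  have hlower := two_pow_card_le_mConst_pi hF_noncomm
  rw [Fintype.card_fin] at hlower
  have hupper := mConst_le_jordanConst_of_injective _ hembed
  exact hs.not_ge (le_trans (by exact_mod_cast hlower) hupper)

/-- Let `P` be a Jordan group with Jordan constant `J_P`, and let `Q₁, ..., Q_s` each
contain a non-abelian finite subgroup. If `s > log₂ J_P` (equivalently `J_P < 2^s`),
then there is no injective group homomorphism `Q₁ × ⋯ × Q_s → P`. -/
theorem stmt_14 {P : Type*} [Group P] {s : ℕ} (Q : Fin s → Type*) [∀ i, Group (Q i)]
    (hJordan : jordanConst P ≠ ⊤)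
    (hQ : ∀ i, ∃ F : Subgroup (Q i), Finite F ∧ ¬ ∀ a b : F, a * b = b * a)
    (hs : jordanConst P < (2 : ℕ∞) ^ s) :
    ¬ ∃ φ : (∀ i, Q i) →* P, Function.Injective φ :=
  stmt_14_general Q hQ hs
end
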